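/- Let (X,d) be a compact metric space and T : X → X a continuous, open, expanding single-valued map (there exist λ > 1, η > 0 with d(Tx,Ty) ≥ λ d(x,y) whenever d(x,y) ≤ η). For every α ∈ (0,1] and every α-Hölder f : X → ℝ, there exists an α-Hölder v : X → ℝ such that f(x) + v(x) − v(T(x)) ≤ β(f) for all x ∈ X, where β(f) = sup{∫ f dμ : μ a T-invariant Borel probability measure}. -/

import Mathlib

/-!
An open expanding map has inverse branches, contracting by `c = λ⁻¹`, defined on all balls of a
fixed radius `ε`. Composing them gives Anosov closing: an orbit segment of length `m` that returns
`(1 - c) ε`-close to its start is shadowed, with error `c ^ (m - k) ε` at time `k`, by a periodic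
orbit of period `m`. The invariant measure equidistributed on that orbit has integral at most
`β(f)`, so by Hölder continuity every such loop has Birkhoff sum at most `m β + H`. Cutting an
arbitrary orbit segment at its last return to each of finitely many small balls gives the uniform
bound `S_n f ≤ n β + C`. Then `W x = sup_{n, z} (S_n f z - n β - G d(z, x) ^ α)` is finite and
`α`-Hölder, and pulling `z` back along a contracting branch shows `W (T x) ≤ W x + β - f x`, so
`v = -W` works.
-/

open MeasureTheory Metric Function Finset Filter
open scoped ENNReal Topology

lemma continuous_of_abs_sub_le_mul_rpow {X : Type*} [PseudoMetricSpace X] {f : X → ℝ}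
    {K α : ℝ} (hα : 0 < α) (hf : ∀ x y, |f x - f y| ≤ K * dist x y ^ α) : Continuous f := by
  refine continuous_iff_continuousAt.2 fun x => ?_
  rw [ContinuousAt, tendsto_iff_dist_tendsto_zero]
  have hlim : Tendsto (fun y => K * dist y x ^ α) (𝓝 x) (𝓝 0) := by
    have := (((continuous_id.dist continuous_const : Continuous fun y => dist y x).rpow_const
      fun _ => Or.inr hα.le).tendsto x)
    simpa [Real.zero_rpow hα.ne'] using this.const_mul K
  exact squeeze_zero (fun _ => dist_nonneg) (fun y => (Real.dist_eq _ _).trans_le (hf y x)) hlim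

lemma sum_range_pow_sub_le {s : ℝ} (hs0 : 0 ≤ s) (hs1 : s < 1) (m : ℕ) :
    ∑ k ∈ range m, s ^ (m - k) ≤ (1 - s)⁻¹ :=
  calc ∑ k ∈ range m, s ^ (m - k) ≤ ∑ k ∈ range (m + 1), s ^ (m - k) := by
        rw [sum_range_succ]; simp
    _ = ∑ k ∈ Finset.range (m + 1), s ^ k := by
        simpa using sum_range_reflect (fun k => s ^ k) (m + 1)
    _ ≤ (1 - s)⁻¹ := by
        rw [range_eq_Ico]; simpa using geom_sum_Ico_le_of_lt_one (m := 0) (n := m + 1) hs0 hs1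

lemma Function.IsPeriodicPt.birkhoffSum_apply_eq {α M : Type*} [AddCommMonoid M] {f : α → α}
    {n : ℕ} {x : α} (hx : IsPeriodicPt f n x) (g : α → M) :
    birkhoffSum f g n (f x) = birkhoffSum f g n x := by
  cases n with
  | zero => simp [birkhoffSum_zero]
  | succ n => rw [birkhoffSum_succ, birkhoffSum_succ', ← iterate_succ_apply, hx.eq, add_comm]

section InverseBranches

variable {X : Type*} [MetricSpace X] {T : X → X} {c ε η : ℝ}

lemma IsOpenMap.exists_uniform_preimage [CompactSpace X] (hTo : IsOpenMap T)
    (hT : Continuous T) {r : ℝ} (hr : 0 < r) :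
    ∃ ε > 0, ∀ x z, dist (T x) z < ε → ∃ y, T y = z ∧ dist x y < r := by
  set U : Set (X × X) := ⋃ a, ball a (r / 2) ×ˢ (T '' ball a (r / 2))
  have hU : IsOpen U := isOpen_iUnion fun a => isOpen_ball.prod (hTo _ isOpen_ball)
  have hgraph : Set.range (fun x => (x, T x)) ⊆ U := by
    rintro _ ⟨x, rfl⟩
    exact Set.mem_iUnion.2 ⟨x, mem_ball_self (half_pos hr), x, mem_ball_self (half_pos hr), rfl⟩
  obtain ⟨ε, hε, hεU⟩ :=
    (isCompact_range (continuous_id.prodMk hT)).exists_thickening_subset_open hU hgraph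
  refine ⟨ε, hε, fun x z hxz => ?_⟩
  have hxzU : (x, z) ∈ U := hεU <| mem_thickening_iff.2
    ⟨(x, T x), ⟨x, rfl⟩, by simpa [Prod.dist_eq, dist_comm] using hxz⟩
  obtain ⟨a, hxa, y, hya, rfl⟩ : ∃ a, dist x a < r / 2 ∧ ∃ y, dist y a < r / 2 ∧ T y = z := by
    simpa [U] using hxzU
  exact ⟨y, rfl, by linarith [dist_triangle_right x y a]⟩

def HasContractingBranches (T : X → X) (c ε : ℝ) : Prop :=
  ∀ x z, dist (T x) z ≤ ε → ∃ y, T y = z ∧ dist x y ≤ c * dist (T x) z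

lemma exists_hasContractingBranches [CompactSpace X] (hT : Continuous T) (hTo : IsOpenMap T)
    (hη : 0 < η) (hexp : ∀ x y, dist x y ≤ η → dist x y ≤ c * dist (T x) (T y)) :
    ∃ ε > 0, 2 * ε ≤ η ∧ HasContractingBranches T c ε := by
  obtain ⟨ε, hε, hpre⟩ := hTo.exists_uniform_preimage hT hη
  refine ⟨min (ε / 2) (η / 2), by positivity, by linarith [min_le_right (ε / 2) (η / 2)],
    fun x z hxz => ?_⟩
  obtain ⟨y, rfl, hxy⟩ := hpre x z (by linarith [min_le_left (ε / 2) (η / 2)])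
  exact ⟨y, rfl, hexp x y hxy.le⟩

lemma dist_le_pow_mul_dist_iterate (hexp : ∀ x y, dist x y ≤ η → dist x y ≤ c * dist (T x) (T y))
    (hc0 : 0 ≤ c) {m : ℕ} {a b : X} (h : ∀ k < m, dist (T^[k] a) (T^[k] b) ≤ η) :
    dist a b ≤ c ^ m * dist (T^[m] a) (T^[m] b) := by
  induction m generalizing a b with
  | zero => simp
  | succ m ih =>
    have hm : ∀ k < m, dist (T^[k] (T a)) (T^[k] (T b)) ≤ η := fun k hk => by
      simpa only [iterate_succ_apply] using h (k + 1) (by omega)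
    calc dist a b ≤ c * dist (T a) (T b) := hexp a b (h 0 m.succ_pos)
      _ ≤ c * (c ^ m * dist (T^[m] (T a)) (T^[m] (T b))) := by gcongr; exact ih hm
      _ = c ^ (m + 1) * dist (T^[m + 1] a) (T^[m + 1] b) := by
        rw [iterate_succ_apply, iterate_succ_apply]; ring

lemma HasContractingBranches.exists_iterate_preimage (h : HasContractingBranches T c ε)
    (hc0 : 0 ≤ c) (hc1 : c ≤ 1) (n : ℕ) {z y : X} (hzy : dist (T^[n] z) y ≤ ε) :
    ∃ w, T^[n] w = y ∧ ∀ k ≤ n, dist (T^[k] w) (T^[k] z) ≤ c ^ (n - k) * dist (T^[n] z) y := by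
  induction n generalizing z with
  | zero =>
    refine ⟨y, rfl, fun k hk => ?_⟩
    obtain rfl : k = 0 := by omega
    simp [dist_comm]
  | succ n ih =>
    simp only [iterate_succ_apply] at hzy ⊢
    obtain ⟨w', rfl, hw'⟩ := ih hzy
    have hw'z : dist (T z) w' ≤ c ^ n * dist (T^[n] (T z)) (T^[n] w') := by
      simpa [dist_comm] using hw' 0 n.zero_le
    have hcn : c ^ n ≤ 1 := pow_le_one₀ hc0 hc1
    obtain ⟨w, rfl, hwz⟩ := h z w' (hw'z.trans ((mul_le_of_le_one_left dist_nonneg hcn).trans hzy))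
    refine ⟨w, rfl, fun k hk => ?_⟩
    cases k with
    | zero =>
      calc dist w z = dist z w := dist_comm _ _
        _ ≤ c * (c ^ n * dist (T^[n] (T z)) (T^[n] (T w))) := hwz.trans (by gcongr)
        _ = _ := by simp [pow_succ]; ring
    | succ k => simpa [iterate_succ_apply] using hw' k (by omega)

theorem HasContractingBranches.exists_isPeriodicPt_shadowing [CompleteSpace X]
    (h : HasContractingBranches T c ε)
    (hexp : ∀ x y, dist x y ≤ η → dist x y ≤ c * dist (T x) (T y)) (hεη : 2 * ε ≤ η)
    (hc0 : 0 ≤ c) (hc1 : c < 1) {m : ℕ} (hm : 0 < m) {z : X}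
    (hz : dist (T^[m] z) z ≤ (1 - c) * ε) :
    ∃ p, IsPeriodicPt T m p ∧ ∀ k ≤ m, dist (T^[k] p) (T^[k] z) ≤ c ^ (m - k) * ε := by
  have hε : 0 ≤ ε := nonneg_of_mul_nonneg_right (dist_nonneg.trans hz) (by linarith)
  have hcoef : ∀ k, c ^ (m - k) * ε ≤ ε := fun k =>
    mul_le_of_le_one_left hε (pow_le_one₀ hc0 hc1.le)
  have hcm : c ^ m ≤ c := pow_le_of_le_one hc0 hc1.le hm.ne'
  set B := closedBall (T^[m] z) ε
  have hpre : ∀ y ∈ B, ∃ w, T^[m] w = y ∧ ∀ k ≤ m, dist (T^[k] w) (T^[k] z) ≤ c ^ (m - k) * ε := by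
    intro y hy
    obtain ⟨w, hw, hwz⟩ := h.exists_iterate_preimage hc0 hc1.le m (mem_closedBall'.1 hy)
    exact ⟨w, hw, fun k hk => (hwz k hk).trans (by gcongr; exact mem_closedBall'.1 hy)⟩
  -- `g` is the inverse branch of `T^[m]` along the orbit segment of `z`
  choose! g hgT hgz using hpre
  have hmaps : Set.MapsTo g B B := fun y hy => mem_closedBall'.2 <|
    calc dist (T^[m] z) (g y) ≤ dist (T^[m] z) z + dist (g y) z := dist_triangle_right _ _ _
      _ ≤ (1 - c) * ε + c * ε := by
        gcongr
        simpa using (hgz y hy 0 m.zero_le).trans (by simpa using mul_le_mul_of_nonneg_right hcm hε)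
      _ = ε := by ring
  have hlip : ∀ y₁ ∈ B, ∀ y₂ ∈ B, dist (g y₁) (g y₂) ≤ c * dist y₁ y₂ := by
    intro y₁ h₁ y₂ h₂
    have hclose : ∀ k < m, dist (T^[k] (g y₁)) (T^[k] (g y₂)) ≤ η := fun k hk =>
      calc _ ≤ dist (T^[k] (g y₁)) (T^[k] z) + dist (T^[k] (g y₂)) (T^[k] z) :=
            dist_triangle_right _ _ _
        _ ≤ ε + ε := add_le_add ((hgz _ h₁ k hk.le).trans (hcoef k))
            ((hgz _ h₂ k hk.le).trans (hcoef k))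
        _ ≤ η := by linarith
    calc dist (g y₁) (g y₂) ≤ c ^ m * dist (T^[m] (g y₁)) (T^[m] (g y₂)) :=
          dist_le_pow_mul_dist_iterate hexp hc0 hclose
      _ ≤ c * dist y₁ y₂ := by rw [hgT _ h₁, hgT _ h₂]; gcongr
  have hcontr : ContractingWith ⟨c, hc0⟩ (hmaps.restrict g B B) :=
    ⟨hc1, LipschitzWith.of_dist_le_mul fun y₁ y₂ => hlip _ y₁.2 _ y₂.2⟩
  obtain ⟨p, hpB, hp, -⟩ := hcontr.exists_fixedPoint' isClosed_closedBall.isComplete hmaps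
    (mem_closedBall_self hε) (edist_ne_top _ _)
  refine ⟨p, ?_, fun k hk => ?_⟩
  · rw [IsPeriodicPt, IsFixedPt]
    conv_lhs => rw [← hp]
    exact hgT p hpB
  · rw [← hp]
    exact hgz p hpB k hk

end InverseBranches

section PeriodicOrbitMeasure

variable {X : Type*} [MeasurableSpace X] {T : X → X} {m : ℕ} {p : X}

noncomputable def periodicOrbitMeasure (T : X → X) (m : ℕ) (p : X) : Measure X :=
  (m : ℝ≥0∞)⁻¹ • birkhoffSum T Measure.dirac m p

lemma isProbabilityMeasure_periodicOrbitMeasure (hm : m ≠ 0) :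
    IsProbabilityMeasure (periodicOrbitMeasure T m p) := by
  constructor
  simp [periodicOrbitMeasure, birkhoffSum, ENNReal.inv_mul_cancel, hm]

lemma measurePreserving_periodicOrbitMeasure (hT : Measurable T) (hp : IsPeriodicPt T m p) :
    MeasurePreserving T (periodicOrbitMeasure T m p) (periodicOrbitMeasure T m p) := by
  refine ⟨hT, ?_⟩
  have hmap : Measure.mapₗ T (birkhoffSum T Measure.dirac m p) =
      birkhoffSum T Measure.dirac m (T p) := by
    rw [map_birkhoffSum]
    simp [birkhoffSum, Measure.mapₗ_apply_of_measurable hT, Measure.map_dirac' hT,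
      ← iterate_succ_apply' T, iterate_succ_apply]
  rw [periodicOrbitMeasure, Measure.map_smul, ← Measure.mapₗ_apply_of_measurable hT, hmap,
    hp.birkhoffSum_apply_eq]

lemma integral_periodicOrbitMeasure [MeasurableSingletonClass X] (f : X → ℝ) :
    ∫ x, f x ∂(periodicOrbitMeasure T m p) = (m : ℝ)⁻¹ * birkhoffSum T f m p := by
  rw [periodicOrbitMeasure, integral_smul_measure, birkhoffSum,
    integral_finsetSum_measure fun k _ => integrable_dirac enorm_lt_top]
  simp [integral_dirac, birkhoffSum]

lemma birkhoffSum_le_of_isPeriodicPt [MeasurableSingletonClass X] (hT : Measurable T)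
    {f : X → ℝ} {β : ℝ}
    (hβ : ∀ μ : Measure X, IsProbabilityMeasure μ → MeasurePreserving T μ μ → ∫ x, f x ∂μ ≤ β)
    (hm : 0 < m) (hp : IsPeriodicPt T m p) : birkhoffSum T f m p ≤ m * β := by
  have := hβ _ (isProbabilityMeasure_periodicOrbitMeasure hm.ne')
    (measurePreserving_periodicOrbitMeasure hT hp)
  rwa [integral_periodicOrbitMeasure, inv_mul_le_iff₀ (by positivity)] at this

end PeriodicOrbitMeasure

theorem HasContractingBranches.birkhoffSum_le_of_dist_iterate_le {X : Type*} [MetricSpace X]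
    [CompleteSpace X] {T : X → X} {c ε η : ℝ} (h : HasContractingBranches T c ε)
    (hexp : ∀ x y, dist x y ≤ η → dist x y ≤ c * dist (T x) (T y)) (hεη : 2 * ε ≤ η)
    (hc0 : 0 ≤ c) (hc1 : c < 1) {f : X → ℝ} {K α β : ℝ} (hK : 0 ≤ K) (hα : 0 < α)
    (hf : ∀ x y, |f x - f y| ≤ K * dist x y ^ α)
    (hper : ∀ m p, 0 < m → IsPeriodicPt T m p → birkhoffSum T f m p ≤ m * β)
    {m : ℕ} {x : X} (hx : dist (T^[m] x) x ≤ (1 - c) * ε) :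
    birkhoffSum T f m x ≤ m * β + K * ε ^ α * (1 - c ^ α)⁻¹ := by
  have hε : 0 ≤ ε := nonneg_of_mul_nonneg_right (dist_nonneg.trans hx) (by linarith)
  have hs1 : c ^ α < 1 := Real.rpow_lt_one hc0 hc1 hα
  rcases m.eq_zero_or_pos with rfl | hm
  · have : 0 < 1 - c ^ α := by linarith
    simp only [birkhoffSum_zero, CharP.cast_eq_zero, zero_mul, zero_add]
    positivity
  obtain ⟨p, hp, hpx⟩ := h.exists_isPeriodicPt_shadowing hexp hεη hc0 hc1 hm hx
  have hshadow : ∀ k ∈ range m, f (T^[k] x) - f (T^[k] p) ≤ K * ε ^ α * (c ^ α) ^ (m - k) := by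
    intro k hk
    calc f (T^[k] x) - f (T^[k] p) ≤ K * dist (T^[k] p) (T^[k] x) ^ α :=
          (le_abs_self _).trans (by rw [dist_comm]; exact hf _ _)
      _ ≤ K * (c ^ (m - k) * ε) ^ α := by gcongr; exact hpx k (mem_range.1 hk).le
      _ = K * ε ^ α * (c ^ α) ^ (m - k) := by
        rw [Real.mul_rpow (by positivity) hε, ← Real.rpow_pow_comm hc0]; ring
  calc birkhoffSum T f m x = birkhoffSum T f m p + ∑ k ∈ range m, (f (T^[k] x) - f (T^[k] p)) := by
        simp [birkhoffSum]
    _ ≤ m * β + ∑ k ∈ range m, K * ε ^ α * (c ^ α) ^ (m - k) :=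
        add_le_add (hper m p hm hp) (sum_le_sum hshadow)
    _ ≤ m * β + K * ε ^ α * (1 - c ^ α)⁻¹ := by
        rw [← mul_sum]
        gcongr
        exact sum_range_pow_sub_le (by positivity) hs1 m

theorem birkhoffSum_le_of_forall_return {X : Type*} [PseudoMetricSpace X] {T : X → X}
    {f : X → ℝ} {ρ β H : ℝ} (hH : 0 ≤ H)
    (hloop : ∀ m x, dist (T^[m] x) x ≤ ρ → birkhoffSum T f m x ≤ m * β + H)
    (hf : ∀ x, f x ≤ β + H) (s : Finset X) (n : ℕ) (x : X)
    (hcov : ∀ k < n, ∃ a ∈ s, dist (T^[k] x) a < ρ / 2) :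
    birkhoffSum T f n x ≤ n * β + (2 * s.card + 1) * H := by
  classical
  induction n using Nat.strong_induction_on generalizing x s with
  | _ n ih =>
  rcases n.eq_zero_or_pos with rfl | hn
  · simp only [birkhoffSum_zero, CharP.cast_eq_zero, zero_mul, zero_add]
    positivity
  obtain ⟨a, ha, hxa⟩ := hcov 0 hn
  -- `J` is the last time before `n` at which the orbit visits the ball around `a`
  set J := Nat.findGreatest (fun j => dist (T^[j] x) a < ρ / 2) (n - 1)
  have hJ : dist (T^[J] x) a < ρ / 2 :=
    Nat.findGreatest_spec (P := fun j => dist (T^[j] x) a < ρ / 2) (Nat.zero_le _) hxa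
  have hJn : J ≤ n - 1 := Nat.findGreatest_le _
  obtain ⟨R, hnR⟩ : ∃ R, n = J + 1 + R := ⟨n - 1 - J, by omega⟩
  have htail : ∀ k < R, ∃ b ∈ s.erase a, dist (T^[k] (T^[J + 1] x)) b < ρ / 2 := by
    intro k hk
    rw [← iterate_add_apply]
    obtain ⟨b, hb, hkb⟩ := hcov (k + (J + 1)) (by omega)
    refine ⟨b, mem_erase.2 ⟨?_, hb⟩, hkb⟩
    rintro rfl
    exact Nat.findGreatest_is_greatest (show J < k + (J + 1) by omega) (by omega) hkb
  have hret : dist (T^[J] x) x ≤ ρ := by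
    rw [iterate_zero_apply] at hxa
    linarith [dist_triangle_right (T^[J] x) x a]
  have hsplit : birkhoffSum T f (J + 1 + R) x =
      birkhoffSum T f J x + f (T^[J] x) + birkhoffSum T f R (T^[J + 1] x) := by
    rw [birkhoffSum_add, birkhoffSum_add, birkhoffSum_one]
  have hR := ih R (by omega) (s.erase a) (T^[J + 1] x) htail
  have hcard : ((s.erase a).card : ℝ) + 1 = s.card := by exact_mod_cast card_erase_add_one ha
  rw [hnR, hsplit, ← hcard]
  push_cast
  linarith [hloop J x hret, hf (T^[J] x)]

theorem HasContractingBranches.exists_forall_birkhoffSum_le {X : Type*} [MetricSpace X]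
    [CompactSpace X] {T : X → X} {c ε η : ℝ} (h : HasContractingBranches T c ε)
    (hexp : ∀ x y, dist x y ≤ η → dist x y ≤ c * dist (T x) (T y)) (hεη : 2 * ε ≤ η)
    (hε : 0 < ε) (hc0 : 0 ≤ c) (hc1 : c < 1) {f : X → ℝ} {K α β : ℝ} (hK : 0 ≤ K) (hα : 0 < α)
    (hf : ∀ x y, |f x - f y| ≤ K * dist x y ^ α)
    (hper : ∀ m p, 0 < m → IsPeriodicPt T m p → birkhoffSum T f m p ≤ m * β) :
    ∃ C, ∀ n x, birkhoffSum T f n x ≤ n * β + C := by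
  obtain ⟨B, hB⟩ : ∃ B, ∀ x, f x ≤ B :=
    (isCompact_range (continuous_of_abs_sub_le_mul_rpow hα hf)).bddAbove.imp
      fun B hB x => hB ⟨x, rfl⟩
  set H := max (B - β) (K * ε ^ α * (1 - c ^ α)⁻¹)
  have hH : 0 ≤ H := (le_max_right _ _).trans' <| by
    have : 0 < 1 - c ^ α := by linarith [Real.rpow_lt_one hc0 hc1 hα]
    positivity
  have hloop : ∀ m x, dist (T^[m] x) x ≤ (1 - c) * ε → birkhoffSum T f m x ≤ m * β + H :=
    fun m x hx => (h.birkhoffSum_le_of_dist_iterate_le hexp hεη hc0 hc1 hK hα hf hper hx).trans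
      (by gcongr; exact le_max_right _ _)
  have hfH : ∀ x, f x ≤ β + H := fun x => by
    linarith [le_max_left (B - β) (K * ε ^ α * (1 - c ^ α)⁻¹), hB x]
  have hρ : 0 < (1 - c) * ε / 2 := by
    have : 0 < 1 - c := by linarith
    positivity
  obtain ⟨s, -, hs⟩ := (isCompact_univ (X := X)).elim_nhds_subcover
    (fun x => ball x ((1 - c) * ε / 2)) fun x _ => ball_mem_nhds x hρ
  exact ⟨(2 * s.card + 1) * H, fun n x => birkhoffSum_le_of_forall_return hH hloop hfH s n x
    fun k _ => by simpa using hs (Set.mem_univ (T^[k] x))⟩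

section Subaction

variable {X : Type*} [MetricSpace X] {T : X → X} {f : X → ℝ} {β C G α : ℝ}

noncomputable def penalizedBirkhoffSup (T : X → X) (f : X → ℝ) (β G α : ℝ) (x : X) : ℝ :=
  ⨆ q : ℕ × X, birkhoffSum T f q.1 q.2 - q.1 * β - G * dist q.2 x ^ α

lemma le_penalizedBirkhoffSup (hC : ∀ n x, birkhoffSum T f n x ≤ n * β + C) (hG : 0 ≤ G)
    (n : ℕ) (z x : X) :
    birkhoffSum T f n z - n * β - G * dist z x ^ α ≤ penalizedBirkhoffSup T f β G α x := by
  refine le_ciSup (f := fun q : ℕ × X => birkhoffSum T f q.1 q.2 - q.1 * β - G * dist q.2 x ^ α)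
    ⟨C, ?_⟩ (n, z)
  rintro _ ⟨⟨n, z⟩, rfl⟩
  have : 0 ≤ G * dist z x ^ α := by positivity
  linarith [hC n z]

lemma penalizedBirkhoffSup_nonneg (hC : ∀ n x, birkhoffSum T f n x ≤ n * β + C) (hG : 0 ≤ G)
    (hα : 0 < α) (x : X) : 0 ≤ penalizedBirkhoffSup T f β G α x := by
  simpa [Real.zero_rpow hα.ne'] using le_penalizedBirkhoffSup hC hG (α := α) 0 x x

lemma penalizedBirkhoffSup_le_add (hC : ∀ n x, birkhoffSum T f n x ≤ n * β + C) (hG : 0 ≤ G)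
    (hα : 0 < α) (hα1 : α ≤ 1) (x y : X) :
    penalizedBirkhoffSup T f β G α x ≤ penalizedBirkhoffSup T f β G α y + G * dist x y ^ α := by
  have : Nonempty (ℕ × X) := ⟨(0, x)⟩
  refine ciSup_le fun ⟨n, z⟩ => ?_
  have hy := le_penalizedBirkhoffSup hC hG (α := α) n z y
  have htri : dist z y ^ α ≤ dist z x ^ α + dist x y ^ α :=
    (Real.rpow_le_rpow dist_nonneg (dist_triangle z x y) hα.le).trans
      (Real.rpow_add_le_add_rpow dist_nonneg dist_nonneg hα.le hα1)
  dsimp only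
  nlinarith [mul_le_mul_of_nonneg_left htri hG]

lemma penalizedBirkhoffSup_apply_le {c ε K : ℝ} (hC : ∀ n x, birkhoffSum T f n x ≤ n * β + C)
    (hG : 0 ≤ G) (hα : 0 < α) (h : HasContractingBranches T c ε) (hc0 : 0 ≤ c) (hε : 0 ≤ ε)
    (hK : 0 ≤ K) (hf : ∀ x y, |f x - f y| ≤ K * dist x y ^ α) (hGK : (K + G) * c ^ α ≤ G)
    (hGC : 2 * C ≤ G * ε ^ α) (x : X) :
    penalizedBirkhoffSup T f β G α (T x) ≤ penalizedBirkhoffSup T f β G α x + β - f x := by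
  have : Nonempty (ℕ × X) := ⟨(0, x)⟩
  refine ciSup_le fun ⟨n, z⟩ => ?_
  dsimp only
  rw [dist_comm z (T x)]
  rcases le_or_gt (dist (T x) z) ε with hnear | hfar
  · obtain ⟨y, rfl, hxy⟩ := h x z hnear
    have hy := le_penalizedBirkhoffSup hC hG (α := α) (n + 1) y x
    rw [birkhoffSum_succ', dist_comm y x] at hy
    have hfy : f x - f y ≤ K * dist x y ^ α := (le_abs_self _).trans (hf x y)
    have hdist : (K + G) * dist x y ^ α ≤ G * dist (T x) (T y) ^ α :=
      calc (K + G) * dist x y ^ α ≤ (K + G) * (c ^ α * dist (T x) (T y) ^ α) := by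
            rw [← Real.mul_rpow hc0 dist_nonneg]; gcongr
        _ = ((K + G) * c ^ α) * dist (T x) (T y) ^ α := by ring
        _ ≤ G * dist (T x) (T y) ^ α := by gcongr
    push_cast at hy
    linarith
  · have hfx : f x ≤ β + C := by simpa using hC 1 x
    have hGε : G * ε ^ α ≤ G * dist (T x) z ^ α := by gcongr
    linarith [hC n z, penalizedBirkhoffSup_nonneg hC hG hα x]

theorem exists_holder_subaction {c ε K : ℝ} (h : HasContractingBranches T c ε) (hc0 : 0 ≤ c)
    (hc1 : c < 1) (hε : 0 < ε) (hK : 0 ≤ K) (hα : 0 < α) (hα1 : α ≤ 1)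
    (hf : ∀ x y, |f x - f y| ≤ K * dist x y ^ α)
    (hC : ∀ n x, birkhoffSum T f n x ≤ n * β + C) :
    ∃ v : X → ℝ, (∃ G > 0, ∀ x y, |v x - v y| ≤ G * dist x y ^ α) ∧
      ∀ x, f x + v x - v (T x) ≤ β := by
  have hs1 : c ^ α < 1 := Real.rpow_lt_one hc0 hc1 hα
  set G := max (max (K * c ^ α / (1 - c ^ α)) (2 * C / ε ^ α)) 1
  have hG : 0 < G := one_pos.trans_le (le_max_right _ _)
  have hGK : (K + G) * c ^ α ≤ G := by
    have := (div_le_iff₀ (sub_pos.2 hs1)).1 ((le_max_left _ _).trans (le_max_left _ _) :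
      K * c ^ α / (1 - c ^ α) ≤ G)
    linarith
  have hGC : 2 * C ≤ G * ε ^ α := (div_le_iff₀ (by positivity)).1
    ((le_max_right _ _).trans (le_max_left _ _))
  refine ⟨fun x => -penalizedBirkhoffSup T f β G α x, ⟨G, hG, fun x y => ?_⟩, fun x => ?_⟩
  · have hxy := penalizedBirkhoffSup_le_add hC hG.le hα hα1 x y
    have hyx := penalizedBirkhoffSup_le_add hC hG.le hα hα1 y x
    rw [dist_comm] at hyx
    rw [abs_le]
    constructor <;> linarith
  · linarith [penalizedBirkhoffSup_apply_le hC hG.le hα h hc0 hε.le hK hf hGK hGC x]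

end Subaction

theorem stmt19 {X : Type*} [MetricSpace X] [CompactSpace X]
    [MeasurableSpace X] [BorelSpace X] (T : X → X)
    (hcont : Continuous T)
    (hopen : IsOpenMap T)
    (hexp : ∃ lam > (1 : ℝ), ∃ η > (0 : ℝ), ∀ x y : X, dist x y ≤ η →
      lam * dist x y ≤ dist (T x) (T y))
    (α : ℝ) (hα : 0 < α) (hα1 : α ≤ 1) (f : X → ℝ)
    (hf : ∃ K > (0 : ℝ), ∀ x y : X, |f x - f y| ≤ K * dist x y ^ α) :
    ∃ v : X → ℝ, (∃ K > (0 : ℝ), ∀ x y : X, |v x - v y| ≤ K * dist x y ^ α) ∧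
      ∀ x : X,
        f x + v x - v (T x) ≤ sSup {r : ℝ | ∃ μ : Measure X, IsProbabilityMeasure μ ∧
          (∀ A : Set X, MeasurableSet A → μ (T ⁻¹' A) = μ A) ∧
          (∫ z, f z ∂μ) = r} := by
  obtain ⟨lam, hlam, η, hη, hexp⟩ := hexp
  obtain ⟨K, hK, hfK⟩ := hf
  have hc0 : 0 ≤ lam⁻¹ := by positivity
  have hc1 : lam⁻¹ < 1 := inv_lt_one_of_one_lt₀ hlam
  have hexp' : ∀ x y, dist x y ≤ η → dist x y ≤ lam⁻¹ * dist (T x) (T y) := fun x y hxy => by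
    rw [inv_mul_eq_div, le_div_iff₀ (by linarith)]
    linarith [hexp x y hxy]
  obtain ⟨ε, hε, hεη, hbr⟩ := exists_hasContractingBranches hcont hopen hη hexp'
  obtain ⟨B, hB⟩ : ∃ B, ∀ x, ‖f x‖ ≤ B :=
    (isBounded_iff_forall_norm_le.1 (isCompact_range
      (continuous_of_abs_sub_le_mul_rpow hα hfK)).isBounded).imp fun B hB x => hB _ ⟨x, rfl⟩
  have hβ : ∀ μ : Measure X, IsProbabilityMeasure μ → MeasurePreserving T μ μ →
      ∫ z, f z ∂μ ≤ sSup {r : ℝ | ∃ μ : Measure X, IsProbabilityMeasure μ ∧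
        (∀ A : Set X, MeasurableSet A → μ (T ⁻¹' A) = μ A) ∧ (∫ z, f z ∂μ) = r} := by
    refine fun μ hμ hT => le_csSup ⟨B, ?_⟩
      ⟨μ, hμ, fun A hA => hT.measure_preimage hA.nullMeasurableSet, rfl⟩
    rintro _ ⟨ν, hν, -, rfl⟩
    simpa using (le_abs_self _).trans (norm_integral_le_of_norm_le_const (μ := ν) (ae_of_all _ hB))
  obtain ⟨C, hC⟩ := hbr.exists_forall_birkhoffSum_le hexp' hεη hε hc0 hc1 hK.le hα hfK
    fun m p hm hp => birkhoffSum_le_of_isPeriodicPt hcont.measurable hβ hm hp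
  exact exists_holder_subaction hbr hc0 hc1 hε hK.le hα hα1 hfK hC
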